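/- arXiv:2401.17470 — 6 statements merged into one kernel-verified Lean document; each statement's English description precedes it below -/
import Mathlib

section
/- Let M be a matroid on a finite linearly ordered ground set E. For every subset S of E there exist a unique basis B of M, a unique subset X of the externally active elements EA(B), and a unique subset Y of the internally active elements IA(B), such that S = (B \ Y) ∪ X. Equivalently, the intervals [B \ IA(B), B ∪ EA(B)], as B ranges over the bases of M, partition the power set of E. -/
open Set

variable {α : Type*}

/-- A circuit of a matroid: a minimal dependent set. -/
def Matroid.Cct (M : Matroid α) (C : Set α) : Prop :=
  M.Dep C ∧ ∀ D ⊂ C, ¬ M.Dep D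

/-- The externally active elements with respect to `S`: elements `e ∈ E \ S` that are the
maximum of some circuit contained in `S ∪ {e}`. -/
def Matroid.exA [LinearOrder α] (M : Matroid α) (S : Set α) : Set α :=
  {e | e ∈ M.E \ S ∧ ∃ C, M.Cct C ∧ C ⊆ insert e S ∧ ∀ f ∈ C, f ≤ e}

/-- The externally passive elements with respect to `S`. -/
def Matroid.exP [LinearOrder α] (M : Matroid α) (S : Set α) : Set α :=
  (M.E \ S) \ M.exA S

/-- The internally active elements with respect to `S`: elements of `S` that are externally
active with respect to `E \ S` in the dual matroid. -/
def Matroid.inA [LinearOrder α] (M : Matroid α) (S : Set α) : Set α :=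
  {i | i ∈ S ∧ i ∈ M✶.exA (M.E \ S)}

/-- The internally passive elements with respect to `S`. -/
def Matroid.inP [LinearOrder α] (M : Matroid α) (S : Set α) : Set α :=
  S \ M.inA S

/-- `I` is internally related to the basis `B` if `I = B \ Y` for some `Y ⊆ IA(B)`. -/
def Matroid.IntRelated [LinearOrder α] (M : Matroid α) (I B : Set α) : Prop :=
  M.IsBase B ∧ ∃ Y ⊆ M.inA B, I = B \ Y

/-- The external/internal order on independent sets. -/
def Matroid.extIntLE [LinearOrder α] (M : Matroid α) (I J : Set α) : Prop :=
  ((∃ B, M.IntRelated I B ∧ M.IntRelated J B) ∧ I ⊆ J) ∨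
  ((¬ ∃ B, M.IntRelated I B ∧ M.IntRelated J B) ∧
    (I \ M.inA I) ∪ M.exA I ⊆ (J \ M.inA J) ∪ M.exA J)

/-!
Existence: rank the ground set with the elements of `S` first, in increasing order, and those of
`E \ S` after them, in decreasing order, and take a basis `B` of minimum total rank. No exchange
along a fundamental circuit lowers the rank, so each element of `S \ B` is the maximum of its
fundamental circuit and, dually, each element of `B \ S` is the maximum of its fundamental
cocircuit.

Uniqueness: if `B` and `B'` both work and `a ∈ B \ B'`, the fundamental circuit of `a` in `B'` and
the fundamental cocircuit of `a` in `B` meet in a second element `c ∈ B' \ B`, and `c < a` by the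
activity of `a`. The activity of `c` (external for `B` or internal for `B'`) then produces a
circuit and a cocircuit meeting in `{c}` alone, which is impossible.
-/

lemma finsum_mem_insert_sdiff_singleton_add {β : Type*} [AddCommMonoid β] (w : α → β)
    {B : Set α} {e f : α} (hB : B.Finite) (he : e ∉ B) (hf : f ∈ insert e B) :
    ∑ᶠ x ∈ insert e B \ {f}, w x + w f = ∑ᶠ x ∈ B, w x + w e := by
  rw [add_comm, ← finsum_mem_singleton (f := w) (a := f),
    finsum_mem_add_sdiff (singleton_subset_iff.2 hf) (hB.insert e), finsum_mem_insert w he hB,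
    add_comm]

namespace Set.Finite

variable [LinearOrder α] {E : Set α}

lemma ncard_inter_Iic_lt_ncard (hE : E.Finite) {e f : α} (hf : f ∈ E) (hef : e < f) :
    (E ∩ Iic e).ncard < (E ∩ Iic f).ncard :=
  ncard_lt_ncard ((ssubset_iff_of_subset (inter_subset_inter_right _ (Iic_subset_Iic.2 hef.le))).2
    ⟨f, ⟨hf, le_rfl⟩, fun h => hef.not_ge h.2⟩) (hE.subset inter_subset_left)

/- `w` ranks `E` with the elements of `S` first, in increasing order, and those of `E \ S` after
them, in decreasing order. -/
lemma exists_weight_monotone_mem_antitone_notMem (hE : E.Finite) (S : Set α) :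
    ∃ w : α → ℤ, (∀ e ∈ S, ∀ f ∈ E, w f ≤ w e → f ≤ e) ∧
      (∀ e ∉ S, ∀ f ∈ E, w e ≤ w f → f ≤ e) := by
  classical
  set p : α → ℤ := fun x => (E ∩ Iic x).ncard
  have hp : ∀ x, p x ≤ E.ncard := fun x => Nat.cast_le.2 (ncard_le_ncard inter_subset_left hE)
  have hlt : ∀ e, ∀ f ∈ E, e < f → p e < p f := fun e f hf hef =>
    Nat.cast_lt.2 (hE.ncard_inter_Iic_lt_ncard hf hef)
  refine ⟨fun x => if x ∈ S then p x else 2 * E.ncard + 1 - p x,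
    fun e he f hf h => le_of_not_gt fun hef => ?_, fun e he f hf h => le_of_not_gt fun hef => ?_⟩
  all_goals
    have := hlt e f hf hef
    by_cases hfS : f ∈ S <;> simp only [he, hfS, if_true, if_false] at h <;> linarith [hp e, hp f]

end Set.Finite

namespace Matroid

variable {M : Matroid α} {B B' C K S : Set α} {e f x y : α}

lemma cct_iff_isCircuit : M.Cct C ↔ M.IsCircuit C :=
  minimal_iff_forall_ssubset.symm

lemma fundCircuit_inter_fundCocircuit_subset (M : Matroid α) (x y : α) (B : Set α) :
    M.fundCircuit x B ∩ M.fundCocircuit y B ⊆ {x, y} := by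
  rintro z ⟨hzC, hzK⟩
  obtain rfl | hzB := M.fundCircuit_subset_insert x B hzC
  · exact .inl rfl
  obtain rfl | hzB' := M.fundCocircuit_subset_insert_compl y B hzK
  · exact .inr rfl
  exact (hzB'.2 hzB).elim

lemma IsCircuit.mem_inter_of_inter_isCocircuit_subset_pair (hC : M.IsCircuit C)
    (hK : M.IsCocircuit K) (hx : x ∈ C ∩ K) (hCK : C ∩ K ⊆ {x, y}) : y ∈ C ∩ K := by
  by_contra hy
  refine hC.inter_isCocircuit_ne_singleton hK (e := x) (subset_antisymm (fun z hz => ?_)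
    (singleton_subset_iff.2 hx))
  obtain rfl | rfl := hCK hz
  · rfl
  · exact (hy hz).elim

section Weight

variable {β : Type*}

lemma exists_isBase_forall_weight_le [AddCommMonoid β] [LinearOrder β] [M.Finite]
    (w : α → β) :
    ∃ B, M.IsBase B ∧ ∀ B', M.IsBase B' → ∑ᶠ x ∈ B, w x ≤ ∑ᶠ x ∈ B', w x :=
  exists_min_image _ _
    (M.ground_finite.finite_subsets.subset fun B (hB : M.IsBase B) => hB.subset_ground)
    M.exists_isBase

variable [AddCommGroup β] [LinearOrder β] [IsOrderedAddMonoid β] {w : α → β} [M.RankFinite]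

lemma IsBase.weight_le_of_mem_fundCircuit (hB : M.IsBase B)
    (hmin : ∀ B', M.IsBase B' → ∑ᶠ x ∈ B, w x ≤ ∑ᶠ x ∈ B', w x)
    (he : e ∈ M.E \ B) (hf : f ∈ M.fundCircuit e B) : w f ≤ w e := by
  obtain rfl | hfe := eq_or_ne f e
  · exact le_rfl
  have hfB : f ∈ B := (M.fundCircuit_subset_insert e B hf).resolve_left hfe
  have hB' : M.IsBase (insert e B \ {f}) := hB.exchange_isBase_of_indep' hfB he.2
    ((hB.indep.mem_fundCircuit_iff (hB.closure_eq ▸ he.1) he.2).1 hf)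
  have key : ∑ᶠ x ∈ B, w x + w f ≤ ∑ᶠ x ∈ B, w x + w e :=
    calc _ ≤ ∑ᶠ x ∈ insert e B \ {f}, w x + w f := add_le_add_left (hmin _ hB') _
      _ = _ := finsum_mem_insert_sdiff_singleton_add w hB.finite he.2 (mem_insert_of_mem e hfB)
  exact le_of_add_le_add_left key

lemma IsBase.weight_le_of_mem_fundCocircuit (hB : M.IsBase B)
    (hmin : ∀ B', M.IsBase B' → ∑ᶠ x ∈ B, w x ≤ ∑ᶠ x ∈ B', w x)
    (he : e ∈ B) (hf : f ∈ M.fundCocircuit e B) : w e ≤ w f := by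
  obtain rfl | hfe := eq_or_ne f e
  · exact le_rfl
  have hfB : f ∈ M.E \ B := (M.fundCocircuit_subset_insert_compl e B hf).resolve_left hfe
  exact hB.weight_le_of_mem_fundCircuit hmin hfB (hB.mem_fundCocircuit_iff_mem_fundCircuit.1 hf)

end Weight

section Activity

variable [LinearOrder α]

lemma IsBase.mem_exA_iff (hB : M.IsBase B) (he : e ∈ M.E \ B) :
    e ∈ M.exA B ↔ ∀ f ∈ M.fundCircuit e B, f ≤ e := by
  simp only [exA, cct_iff_isCircuit, mem_ofPred_eq, he, true_and]
  refine ⟨fun ⟨C, hC, hCB, hle⟩ => ?_, fun h => ⟨_, hB.fundCircuit_isCircuit he.1 he.2,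
    M.fundCircuit_subset_insert e B, h⟩⟩
  rwa [← hC.eq_fundCircuit_of_subset hB.indep hCB]

lemma IsBase.mem_inA_iff (hB : M.IsBase B) (he : e ∈ B) :
    e ∈ M.inA B ↔ ∀ f ∈ M.fundCocircuit e B, f ≤ e := by
  have h := hB.compl_isBase_dual.mem_exA_iff (e := e) ⟨hB.subset_ground he, fun h => h.2 he⟩
  simp only [inA, mem_ofPred_eq, he, true_and, h, fundCocircuit, dual_ground]

def activityInterval (M : Matroid α) (B : Set α) : Set (Set α) :=
  Icc (B \ M.inA B) (B ∪ M.exA B)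

lemma mem_activityInterval_iff :
    S ∈ M.activityInterval B ↔ S \ B ⊆ M.exA B ∧ B \ S ⊆ M.inA B := by
  rw [activityInterval, mem_Icc, sdiff_subset_comm, ← sdiff_subset_iff, and_comm]

lemma exists_isBase_mem_activityInterval [M.Finite] (hS : S ⊆ M.E) :
    ∃ B, M.IsBase B ∧ S ∈ M.activityInterval B := by
  obtain ⟨w, hwS, hwS'⟩ := M.ground_finite.exists_weight_monotone_mem_antitone_notMem S
  obtain ⟨B, hB, hmin⟩ := M.exists_isBase_forall_weight_le w
  refine ⟨B, hB, mem_activityInterval_iff.2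
    ⟨fun e ⟨heS, heB⟩ => ?_, fun e ⟨heB, heS⟩ => ?_⟩⟩
  · refine (hB.mem_exA_iff ⟨hS heS, heB⟩).2 fun f hf => hwS e heS f ?_
      (hB.weight_le_of_mem_fundCircuit hmin ⟨hS heS, heB⟩ hf)
    exact (hB.fundCircuit_isCircuit (hS heS) heB).subset_ground hf
  · refine (hB.mem_inA_iff heB).2 fun f hf => hwS' e heS f ?_
      (hB.weight_le_of_mem_fundCocircuit hmin heB hf)
    exact (fundCocircuit_isCocircuit heB hB).subset_ground hf

lemma IsBase.subset_of_mem_activityInterval (hB : M.IsBase B) (hB' : M.IsBase B')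
    (hSB : S ∈ M.activityInterval B) (hSB' : S ∈ M.activityInterval B') : B ⊆ B' := by
  rw [mem_activityInterval_iff] at hSB hSB'
  intro a haB
  by_contra haB'
  have haE := hB.subset_ground haB
  have hC := hB'.fundCircuit_isCircuit haE haB'
  have hK := fundCocircuit_isCocircuit haB hB
  obtain ⟨c, ⟨hcC, hcK⟩, hca⟩ := (hC.isCocircuit_inter_nontrivial hK
    ⟨a, M.mem_fundCircuit a B', M.mem_fundCocircuit a B⟩).exists_ne a
  have hcB' : c ∈ B' := (M.fundCircuit_subset_insert a B' hcC).resolve_left hca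
  have hcB : c ∉ B :=
    ((M.fundCocircuit_subset_insert_compl a B hcK).resolve_left hca).2
  have hc_lt : c < a := by
    refine lt_of_le_of_ne ?_ hca
    by_cases haS : a ∈ S
    · exact (hB'.mem_exA_iff ⟨haE, haB'⟩).1 (hSB'.1 ⟨haS, haB'⟩) c hcC
    · exact (hB.mem_inA_iff haB).1 (hSB.2 ⟨haB, haS⟩) c hcK
  by_cases hcS : c ∈ S
  · have hC' := hB.fundCircuit_isCircuit (hB'.subset_ground hcB') hcB
    have haC' := hC'.mem_inter_of_inter_isCocircuit_subset_pair hK ⟨M.mem_fundCircuit c B, hcK⟩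
      (M.fundCircuit_inter_fundCocircuit_subset c a B)
    exact hc_lt.not_ge ((hB.mem_exA_iff ⟨hB'.subset_ground hcB', hcB⟩).1
      (hSB.1 ⟨hcS, hcB⟩) a haC'.1)
  · have hK' := fundCocircuit_isCocircuit hcB' hB'
    have haK' :=
      hC.mem_inter_of_inter_isCocircuit_subset_pair hK' ⟨hcC, M.mem_fundCocircuit c B'⟩
      (pair_comm a c ▸ M.fundCircuit_inter_fundCocircuit_subset a c B')
    exact hc_lt.not_ge ((hB'.mem_inA_iff hcB').1 (hSB'.2 ⟨hcB', hcS⟩) a haK'.2)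

lemma IsBase.eq_of_mem_activityInterval (hB : M.IsBase B) (hB' : M.IsBase B')
    (hSB : S ∈ M.activityInterval B) (hSB' : S ∈ M.activityInterval B') : B = B' :=
  hB.eq_of_subset_isBase hB' (hB.subset_of_mem_activityInterval hB' hSB hSB')

lemma sdiff_union_eq_iff_mem_activityInterval {X Y : Set α} :
    (X ⊆ M.exA B ∧ Y ⊆ M.inA B ∧ S = B \ Y ∪ X) ↔
      S ∈ M.activityInterval B ∧ X = S \ B ∧ Y = B \ S := by
  constructor
  · rintro ⟨hX, hY, rfl⟩
    have hXB : ∀ x ∈ X, x ∉ B := fun x hx => (hX hx).1.2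
    have hYB : ∀ y ∈ Y, y ∈ B := fun y hy => (hY hy).1
    have hSX : (B \ Y ∪ X) \ B = X := by
      ext x
      simp only [mem_sdiff, mem_union]
      grind
    have hSY : B \ (B \ Y ∪ X) = Y := by
      ext x
      simp only [mem_sdiff, mem_union]
      grind
    exact ⟨mem_activityInterval_iff.2 ⟨by rwa [hSX], by rwa [hSY]⟩, hSX.symm, hSY.symm⟩
  · rintro ⟨hS, rfl, rfl⟩
    refine ⟨(mem_activityInterval_iff.1 hS).1, (mem_activityInterval_iff.1 hS).2, ?_⟩
    ext x
    simp only [mem_sdiff, mem_union]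
    tauto

end Activity

end Matroid

/-- Crapo's decomposition: every subset of the ground set is uniquely of the form
`(B \ Y) ∪ X` with `B` a basis, `X ⊆ EA(B)`, `Y ⊆ IA(B)`. -/
theorem crapo_decomposition [LinearOrder α] (M : Matroid α) [M.Finite]
    (S : Set α) (hS : S ⊆ M.E) :
    ∃! p : Set α × Set α × Set α,
      M.IsBase p.1 ∧ p.2.1 ⊆ M.exA p.1 ∧ p.2.2 ⊆ M.inA p.1 ∧
        S = (p.1 \ p.2.2) ∪ p.2.1 := by
  obtain ⟨B, hB, hSB⟩ := M.exists_isBase_mem_activityInterval hS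
  refine ⟨(B, S \ B, B \ S),
    ⟨hB, Matroid.sdiff_union_eq_iff_mem_activityInterval.2 ⟨hSB, rfl, rfl⟩⟩, ?_⟩
  rintro ⟨B', X, Y⟩ ⟨hB', h⟩
  dsimp only at hB' h
  obtain ⟨hSB', rfl, rfl⟩ := Matroid.sdiff_union_eq_iff_mem_activityInterval.1 h
  obtain rfl := hB'.eq_of_mem_activityInterval hB hSB' hSB
  rfl
end

section
/- The map sending an independent set I = (S ∪ IP(C)), where C is the basis related to I and S ⊆ IA(C), to (IA(C) \ S) ∪ IP(C), is a well-defined involutive bijection from the set of independent sets of M to itself. -/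
open Set

variable {α : Type*}

/-! Every independent `I` lies in exactly one basis `C` with `C \ I ⊆ IA(C)` (Crapo): existence
by taking the colex-largest basis containing `I`, uniqueness because the least element of the
symmetric difference of two such bases `C, C'`, say in `C \ C'`, is internally active in `C`, so
its fundamental cocircuit, which meets `C'`, has a smaller element in `C' \ C`. The flip replaces
`S = I ∩ IA(C)` by `IA(C) \ S` and keeps `C`, hence is an involution. -/

namespace Matroid

variable {M : Matroid α} {B B' C I S : Set α} {i : α}

lemma IsCircuit.cct (h : M.IsCircuit C) : M.Cct C :=
  ⟨h.dep, fun _ hD => (isCircuit_iff_forall_ssubset.1 h).2 hD |>.not_dep⟩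

variable [LinearOrder α]

lemma inA_subset (M : Matroid α) (S : Set α) : M.inA S ⊆ S := fun _ h => h.1

lemma intRelated_iff : M.IntRelated I B ↔ M.IsBase B ∧ I ⊆ B ∧ B \ I ⊆ M.inA B := by
  refine ⟨?_, fun ⟨hB, hIB, hA⟩ => ⟨hB, B \ I, hA, (sdiff_sdiff_cancel_left hIB).symm⟩⟩
  rintro ⟨hB, Y, hY, rfl⟩
  rw [sdiff_sdiff_cancel_left (hY.trans (M.inA_subset B))]
  exact ⟨hB, sdiff_subset, hY⟩

lemma mem_inA_of_exchange_lt (hB : M.IsBase B) (hi : i ∈ B)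
    (h : ∀ e ∉ B, M.IsBase (insert e (B \ {i})) → e < i) : i ∈ M.inA B := by
  have hiE : i ∈ M.E := hB.subset_ground hi
  have hdep : M✶.Dep (insert i ((M.E \ B) ∩ Iic i)) := by
    refine ⟨fun hind => ?_, insert_subset hiE (inter_subset_left.trans sdiff_subset)⟩
    obtain ⟨-, B'', hB'', hdisj⟩ := dual_indep_iff_exists'.1 hind
    have hiB'' : i ∉ B'' := fun hi'' => hdisj.ne_of_mem (mem_insert _ _) hi'' rfl
    obtain ⟨e, ⟨heB'', heB⟩, hexch⟩ := hB.exchange hB'' ⟨hi, hiB''⟩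
    exact hdisj.ne_of_mem (mem_insert_of_mem _
      ⟨⟨hB''.subset_ground heB'', heB⟩, (h e heB hexch).le⟩) heB'' rfl
  obtain ⟨D, hDsub, hD⟩ := hdep.exists_isCircuit_subset
  refine ⟨hi, ⟨hiE, fun hi' => hi'.2 hi⟩, D, hD.cct, hDsub.trans (insert_subset_insert
    inter_subset_left), fun f hf => ?_⟩
  obtain rfl | hf := hDsub hf
  exacts [le_rfl, hf.2]

/-- Take the colex-largest basis `B` containing `I`: an exchange `B - i + e` with `i < e` would be
colex-larger. -/
lemma Indep.exists_intRelated [M.Finite] (hI : M.Indep I) : ∃ B, M.IntRelated I B := by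
  classical
  have hE := M.ground_finite
  let bases := hE.toFinset.powerset.filter fun B : Finset α => M.IsBase ↑B ∧ I ⊆ ↑B
  have hbases : bases.Nonempty := by
    obtain ⟨B, hB, hIB⟩ := hI.exists_isBase_superset
    exact ⟨hB.finite.toFinset, by simpa [bases, hB, hIB] using hB.subset_ground⟩
  obtain ⟨B, hBmem, hBmax⟩ := bases.exists_max_image toColex hbases
  obtain ⟨-, hB, hIB⟩ := Finset.mem_filter.1 hBmem
  refine ⟨B, intRelated_iff.2 ⟨hB, hIB, fun i ⟨hiB, hiI⟩ => ?_⟩⟩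
  refine mem_inA_of_exchange_lt hB hiB fun e heB hexch => ?_
  have hie : i ≠ e := by rintro rfl; exact heB hiB
  by_contra! hei
  have hmem : insert e (B.erase i) ∈ bases := by
    refine Finset.mem_filter.2 ⟨?_, by simpa using hexch, ?_⟩
    · simpa using hexch.subset_ground
    · push_cast
      exact fun x hx => mem_insert_of_mem _ ⟨hIB hx, by rintro rfl; exact hiI hx⟩
  refine (hBmax _ hmem).not_gt (Finset.Colex.toColex_lt_toColex_iff_exists_forall_lt.2
    ⟨e, Finset.mem_insert_self _ _, heB, fun b hb hb' => ?_⟩)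
  obtain rfl : b = i := by by_contra hbi; exact hb' (by simp [hb, hbi])
  exact lt_of_le_of_ne hei hie

lemma exists_lt_of_mem_inA (hi : i ∈ M.inA B) (hB' : M.IsBase B') (hiB' : i ∉ B') :
    ∃ e ∈ B' \ B, e < i := by
  obtain ⟨-, -, D, hD, hDsub, hDle⟩ := hi
  have hDE : D ⊆ M.E := hD.1.subset_ground
  obtain ⟨e, heD, heB'⟩ : (D ∩ B').Nonempty := by
    by_contra! h
    refine hD.1.not_indep (hB'.compl_isBase_dual.indep.subset fun x hx => ⟨hDE hx, ?_⟩)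
    exact fun hxB' => h.subset ⟨hx, hxB'⟩
  have hei : e ≠ i := by rintro rfl; exact hiB' heB'
  obtain rfl | he := hDsub heD
  exacts [absurd rfl hei, ⟨e, ⟨heB', he.2⟩, lt_of_le_of_ne (hDle e heD) hei⟩]

lemma IntRelated.exists_lt_of_mem_diff (h : M.IntRelated I B) (h' : M.IntRelated I B')
    (hi : i ∈ B \ B') : ∃ e ∈ B' \ B, e < i := by
  obtain ⟨-, -, hA⟩ := intRelated_iff.1 h
  obtain ⟨hB', hIB', -⟩ := intRelated_iff.1 h'
  exact exists_lt_of_mem_inA (hA ⟨hi.1, fun hiI => hi.2 (hIB' hiI)⟩) hB' hi.2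

lemma IntRelated.base_eq [M.RankFinite] (h : M.IntRelated I B) (h' : M.IntRelated I B') :
    B = B' := by
  by_contra hne
  have hne' : ((B \ B') ∪ (B' \ B)).Nonempty := by
    by_contra! hempty
    rw [union_empty_iff, sdiff_eq_empty, sdiff_eq_empty] at hempty
    exact hne (hempty.1.antisymm hempty.2)
  have hfin : ((B \ B') ∪ (B' \ B)).Finite :=
    h.1.finite.sdiff.union h'.1.finite.sdiff
  obtain ⟨d, hd, hdmin⟩ := exists_min_image _ id hfin hne'
  rcases hd with hd | hd
  · obtain ⟨e, he, hed⟩ := h.exists_lt_of_mem_diff h' hd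
    exact (hdmin e (Or.inr he)).not_gt hed
  · obtain ⟨e, he, hed⟩ := h'.exists_lt_of_mem_diff h hd
    exact (hdmin e (Or.inl he)).not_gt hed

lemma intRelated_union_inP (hC : M.IsBase C) (hS : S ⊆ M.inA C) :
    M.IntRelated (S ∪ M.inP C) C := by
  refine intRelated_iff.2 ⟨hC, union_subset (hS.trans (M.inA_subset C)) sdiff_subset, ?_⟩
  rintro x ⟨hxC, hx⟩
  by_contra hxA
  exact hx (Or.inr ⟨hxC, hxA⟩)

/-- For `I = S ∪ IP(C)` with `C` the basis related to `I`, `inA C \ I` is `IA(C) \ S`. Off the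
independent sets `C` is an arbitrary set. -/
noncomputable def internalFlip (M : Matroid α) (I : Set α) : Set α :=
  let C := Classical.epsilon (M.IntRelated I)
  (M.inA C \ I) ∪ M.inP C

lemma internalFlip_union_inP [M.RankFinite] (hC : M.IsBase C) (hS : S ⊆ M.inA C) :
    M.internalFlip (S ∪ M.inP C) = (M.inA C \ S) ∪ M.inP C := by
  have hrel := intRelated_union_inP hC hS
  have hC' : Classical.epsilon (M.IntRelated (S ∪ M.inP C)) = C :=
    (Classical.epsilon_spec ⟨C, hrel⟩).base_eq hrel
  rw [internalFlip, hC', ← sdiff_sdiff, sdiff_union_self]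

lemma Indep.exists_eq_union_inP [M.Finite] (hI : M.Indep I) :
    ∃ C, M.IsBase C ∧ ∃ S ⊆ M.inA C, I = S ∪ M.inP C := by
  obtain ⟨C, hC, Y, hY, rfl⟩ := hI.exists_intRelated
  refine ⟨C, hC, M.inA C \ Y, sdiff_subset, ?_⟩
  ext x
  have hYC : x ∈ Y → x ∈ M.inA C := fun hx => hY hx
  have hAC : x ∈ M.inA C → x ∈ C := fun hx => hx.1
  simp only [inP, mem_sdiff, mem_union]
  tauto

end Matroid

/-- The map `S ∪ IP(C) ↦ (IA(C) \ S) ∪ IP(C)` (where `C` is the basis related to the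
independent set) is a well-defined involutive bijection of the independent sets. -/
theorem flip_involution [LinearOrder α] (M : Matroid α) [M.Finite] :
    ∃ f : Set α → Set α,
      (∀ C, M.IsBase C → ∀ S ⊆ M.inA C, f (S ∪ M.inP C) = (M.inA C \ S) ∪ M.inP C) ∧
      (∀ I, M.Indep I → M.Indep (f I) ∧ f (f I) = I) := by
  refine ⟨M.internalFlip, fun C hC S hS => Matroid.internalFlip_union_inP hC hS, fun I hI => ?_⟩
  obtain ⟨C, hC, S, hS, rfl⟩ := hI.exists_eq_union_inP
  rw [Matroid.internalFlip_union_inP hC hS, Matroid.internalFlip_union_inP hC sdiff_subset,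
    sdiff_sdiff_cancel_left hS]
  exact ⟨hC.indep.subset (union_subset (sdiff_subset.trans (M.inA_subset C)) sdiff_subset), rfl⟩
end

section
/- Let Δ be a pure shellable simplicial complex with shelling order F_1, …, F_s and restriction sets R_1, …, R_s. Then the h-vector of Δ satisfies h_i = #{ j : |R_j| = i } for all i. -/
open Polynomial

/-- For a shelling order of a pure simplicial complex, the `h`-vector counts the
restriction sets by cardinality: `h i = #{j : |R j| = i}`. -/
theorem h_vector_eq_restriction_count {α : Type*} [Fintype α] [DecidableEq α]
    (d s : ℕ) (F R : Fin s → Finset α)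
    (hpure : ∀ j, (F j).card = d)
    (hshell : ∀ i k : Fin s, i < k → ∃ j, j < k ∧ ∃ e ∈ F k,
      F i ∩ F k ⊆ F j ∩ F k ∧ F j ∩ F k = F k \ {e})
    (hR : ∀ j : Fin s, ∀ A ⊆ F j, (R j ⊆ A ↔ ∀ i, i < j → ¬ A ⊆ F i))
    (h : ℕ → ℤ)
    (hh : ∑ A ∈ Finset.univ.powerset.filter
        (fun A : Finset α => ∃ j, A ⊆ F j),
        ((X : Polynomial ℤ) - 1) ^ (d - A.card)
      = ∑ i ∈ Finset.range (d + 1), C (h i) * (X : Polynomial ℤ) ^ (d - i)) :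
    ∀ i ≤ d, h i =
      ((Finset.univ : Finset (Fin s)).filter (fun j => (R j).card = i)).card := by
  classical
  -- no facet is contained in an earlier one
  have hnot : ∀ i k : Fin s, i < k → ¬ F k ⊆ F i := by
    intro i k hik hsub
    obtain ⟨j, hj, e, he, h1, h2⟩ := hshell i k hik
    have heq : F i ∩ F k = F k := Finset.inter_eq_right.mpr hsub
    rw [heq, h2] at h1
    exact (Finset.mem_sdiff.mp (h1 he)).2 (Finset.mem_singleton_self e)
  have hRF : ∀ j, R j ⊆ F j := fun j =>
    (hR j (F j) Finset.Subset.rfl).mpr (fun i hij hsub => hnot i j hij hsub)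
  have hRd : ∀ j, (R j).card ≤ d := fun j =>
    (hpure j) ▸ Finset.card_le_card (hRF j)
  -- interval sum lemma: ∑_{B ⊆ S} (X-1)^{|S|-|B|} = X^{|S|}
  have aux : ∀ S : Finset α,
      ∑ B ∈ S.powerset, ((X : Polynomial ℤ) - 1) ^ (S.card - B.card) = X ^ S.card := by
    intro S
    have hpa := Finset.prod_add (fun _ : α => (1 : Polynomial ℤ))
      (fun _ => (X : Polynomial ℤ) - 1) S
    have hX : (1 : Polynomial ℤ) + (X - 1) = X := by ring
    simp only [hX, Finset.prod_const_one, one_mul, Finset.prod_const] at hpa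
    rw [hpa]
    refine Finset.sum_congr rfl fun t ht => ?_
    rw [Finset.card_sdiff_of_subset (Finset.mem_powerset.mp ht)]
  -- the face set partitions into intervals [R j, F j]
  have hpart : Finset.univ.powerset.filter (fun A : Finset α => ∃ j, A ⊆ F j)
      = Finset.univ.biUnion
        (fun j : Fin s => (F j).powerset.filter (fun A => R j ⊆ A)) := by
    ext A
    simp only [Finset.mem_filter, Finset.mem_powerset, Finset.mem_biUnion,
      Finset.mem_univ, true_and]
    constructor
    · rintro ⟨hAu, j, hj⟩
      set T := Finset.univ.filter (fun k : Fin s => A ⊆ F k) with hT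
      have hne : T.Nonempty := ⟨j, by simp [hT, hj]⟩
      have hmem : A ⊆ F (T.min' hne) := by
        have := T.min'_mem hne
        simp only [hT, Finset.mem_filter, Finset.mem_univ, true_and] at this
        exact this
      refine ⟨T.min' hne, hmem, ?_⟩
      refine (hR _ A hmem).mpr ?_
      intro k hk hsub
      exact absurd (T.min'_le k (by simp [hT, hsub])) (not_le.mpr hk)
    · rintro ⟨j, hA, _⟩
      exact ⟨Finset.subset_univ _, j, hA⟩
  have hdisj : (↑(Finset.univ : Finset (Fin s)) : Set (Fin s)).PairwiseDisjoint
      (fun j : Fin s => (F j).powerset.filter (fun A => R j ⊆ A)) := by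
    intro j₁ _ j₂ _ hne
    simp only [Function.onFun]
    rw [Finset.disjoint_left]
    intro A hA1 hA2
    simp only [Finset.mem_filter, Finset.mem_powerset] at hA1 hA2
    rcases lt_or_gt_of_ne hne with hlt | hlt
    · exact (hR j₂ A hA2.1).mp hA2.2 j₁ hlt hA1.1
    · exact (hR j₁ A hA1.1).mp hA1.2 j₂ hlt hA2.1
  -- the key identity
  have key : ∑ A ∈ Finset.univ.powerset.filter
        (fun A : Finset α => ∃ j, A ⊆ F j),
        ((X : Polynomial ℤ) - 1) ^ (d - A.card)
      = ∑ j : Fin s, (X : Polynomial ℤ) ^ (d - (R j).card) := by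
    rw [hpart, Finset.sum_biUnion hdisj]
    refine Finset.sum_congr rfl fun j _ => ?_
    have hcard : (F j \ R j).card = d - (R j).card := by
      rw [Finset.card_sdiff_of_subset (hRF j), hpure j]
    have hbij : ∑ A ∈ (F j).powerset.filter (fun A => R j ⊆ A),
        ((X : Polynomial ℤ) - 1) ^ (d - A.card)
        = ∑ B ∈ (F j \ R j).powerset,
          ((X : Polynomial ℤ) - 1) ^ ((F j \ R j).card - B.card) := by
      refine Finset.sum_nbij' (fun A => A \ R j) (fun B => R j ∪ B) ?_ ?_ ?_ ?_ ?_
      · intro A hA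
        simp only [Finset.mem_filter, Finset.mem_powerset] at hA ⊢
        exact Finset.sdiff_subset_sdiff hA.1 Finset.Subset.rfl
      · intro B hB
        simp only [Finset.mem_filter, Finset.mem_powerset] at hB ⊢
        refine ⟨Finset.union_subset (hRF j) ?_, Finset.subset_union_left⟩
        exact hB.trans (Finset.sdiff_subset)
      · intro A hA
        simp only [Finset.mem_filter, Finset.mem_powerset] at hA
        exact Finset.union_sdiff_of_subset hA.2
      · intro B hB
        simp only [Finset.mem_powerset] at hB
        exact Finset.union_sdiff_cancel_left
          (Finset.disjoint_of_subset_right hB Finset.disjoint_sdiff)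
      · intro A hA
        simp only [Finset.mem_filter, Finset.mem_powerset] at hA
        congr 1
        have h1 : (A \ R j).card = A.card - (R j).card :=
          Finset.card_sdiff_of_subset hA.2
        have h2 : (R j).card ≤ A.card := Finset.card_le_card hA.2
        have h3 : A.card ≤ d := (hpure j) ▸ Finset.card_le_card hA.1
        rw [hcard, h1]
        omega
    rw [hbij, aux, hcard]
  -- compare coefficients
  intro i hi
  have heq := hh.symm.trans key
  have hc := congrArg (fun p : Polynomial ℤ => p.coeff (d - i)) heq
  simp only [Polynomial.finset_sum_coeff, Polynomial.coeff_C_mul,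
    Polynomial.coeff_X_pow, mul_ite, mul_one, mul_zero] at hc
  rw [Finset.sum_eq_single_of_mem i (Finset.mem_range.mpr (by omega))
    (fun b hb hbne => by
      rw [if_neg]
      have := Finset.mem_range.mp hb
      omega),
    if_pos rfl, Finset.sum_boole] at hc
  rw [hc]
  congr 1
  congr 1
  apply Finset.filter_congr
  intro j _
  have := hRd j
  omega
end

section
/- Let M be a matroid of rank r on an n-element linearly ordered set E. The augmented external activity complex Δ_M, with ground set {x_e, y_e, z_e : e ∈ E} and one facet F(I) = x_{I ∪ EP(I)} y_Y z_{I ∪ EA(I)} for each independent set I = B \ Y (B a basis, Y ⊆ IA(B)), is a pure simplicial complex of dimension n + r − 1. -/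
open Set

variable {α : Type*}

/-! The facet `F(I)` is a disjoint union of tagged copies of `I ∪ EP(I)`, `Y` and `I ∪ EA(I)`.
Since `EP(I)` and `EA(I)` partition `E \ I`, the `x`- and `z`-parts together have
`|E| + |I|` elements, and `|I| + |Y| = |B| = r`. -/

namespace Set

variable {ι : Type*}

theorem ncard_prod_singleton (s : Set α) (i : ι) : (s ×ˢ ({i} : Set ι)).ncard = s.ncard := by
  rw [ncard_prod, ncard_singleton, mul_one]

theorem ncard_union_prod_singleton_three {s t u : Set α} {i j k : ι}
    (hij : i ≠ j) (hik : i ≠ k) (hjk : j ≠ k) (hs : s.Finite) (ht : t.Finite) (hu : u.Finite) :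
    ((s ×ˢ {i}) ∪ (t ×ˢ {j}) ∪ (u ×ˢ {k})).ncard = s.ncard + t.ncard + u.ncard := by
  have hst : Disjoint (s ×ˢ {i}) (t ×ˢ {j}) :=
    disjoint_prod.2 (Or.inr (disjoint_singleton.2 hij))
  have hstu : Disjoint ((s ×ˢ {i}) ∪ (t ×ˢ {j})) (u ×ˢ {k}) :=
    disjoint_union_left.2 ⟨disjoint_prod.2 (Or.inr (disjoint_singleton.2 hik)),
      disjoint_prod.2 (Or.inr (disjoint_singleton.2 hjk))⟩
  rw [ncard_union_eq hstu ((hs.prod (finite_singleton i)).union (ht.prod (finite_singleton j)))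
      (hu.prod (finite_singleton k)),
    ncard_union_eq hst (hs.prod (finite_singleton i)) (ht.prod (finite_singleton j)),
    ncard_prod_singleton, ncard_prod_singleton, ncard_prod_singleton]

end Set

namespace Matroid

variable [LinearOrder α] {M : Matroid α} {S : Set α}

theorem exA_subset_ground_diff : M.exA S ⊆ M.E \ S := fun _ he => he.1

theorem exP_subset_ground_diff : M.exP S ⊆ M.E \ S := sdiff_subset

theorem exP_union_exA : M.exP S ∪ M.exA S = M.E \ S :=
  sdiff_union_of_subset exA_subset_ground_diff

theorem disjoint_exP_exA : Disjoint (M.exP S) (M.exA S) := disjoint_sdiff_left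

theorem ncard_union_exP_add_ncard_union_exA [M.Finite] (hS : S ⊆ M.E) :
    (S ∪ M.exP S).ncard + (S ∪ M.exA S).ncard = M.E.ncard + S.ncard := by
  have hfin : ∀ T ⊆ M.E, T.Finite := fun _ hT => M.ground_finite.subset hT
  have hP : M.exP S ⊆ M.E := exP_subset_ground_diff.trans sdiff_subset
  have hA : M.exA S ⊆ M.E := exA_subset_ground_diff.trans sdiff_subset
  have hunion : (S ∪ M.exP S) ∪ (S ∪ M.exA S) = M.E := by
    rw [union_union_union_comm, union_self, exP_union_exA, union_sdiff_cancel hS]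
  have hinter : (S ∪ M.exP S) ∩ (S ∪ M.exA S) = S := by
    rw [← union_inter_distrib_left, disjoint_exP_exA.inter_eq, union_empty]
  rw [← ncard_union_add_ncard_inter _ _ (hfin _ (union_subset hS hP))
    (hfin _ (union_subset hS hA)), hunion, hinter]

end Matroid

/-- The augmented external activity complex is pure of dimension `n + r - 1`: each facet
`F(I) = x_{I ∪ EP(I)} y_Y z_{I ∪ EA(I)}` has cardinality `n + r`. -/
theorem augmented_complex_pure [LinearOrder α] (M : Matroid α) [M.Finite]
    (n r : ℕ) (hn : M.E.ncard = n) (hr : ∀ B, M.IsBase B → B.ncard = r)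
    (B Y I : Set α) (hB : M.IsBase B) (hY : Y ⊆ M.inA B) (hI : I = B \ Y) :
    (((I ∪ M.exP I) ×ˢ ({0} : Set (Fin 3))) ∪ (Y ×ˢ ({1} : Set (Fin 3))) ∪
      ((I ∪ M.exA I) ×ˢ ({2} : Set (Fin 3)))).ncard = n + r := by
  have hYB : Y ⊆ B := fun _ hy => (hY hy).1
  have hIE : I ⊆ M.E := hI ▸ sdiff_subset.trans hB.subset_ground
  have hfin : ∀ T ⊆ M.E, T.Finite := fun _ hT => M.ground_finite.subset hT
  rw [Set.ncard_union_prod_singleton_three (by decide) (by decide) (by decide)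
    (hfin _ (union_subset hIE (Matroid.exP_subset_ground_diff.trans sdiff_subset)))
    (hfin _ (hYB.trans hB.subset_ground))
    (hfin _ (union_subset hIE (Matroid.exA_subset_ground_diff.trans sdiff_subset)))]
  have hxz := Matroid.ncard_union_exP_add_ncard_union_exA hIE
  have hIY : I.ncard + Y.ncard = r :=
    hI ▸ hr B hB ▸ ncard_sdiff_add_ncard_of_subset hYB (hfin _ hB.subset_ground)
  omega
end

section
/- If the independent set I is internally related to the basis B (I = B \ Y with Y ⊆ IA(B)), then I ∪ EP(I) = B ∪ EP(B) and I ∪ EA(I) = (B ∪ EA(B)) \ Y. Consequently, the facet F(I) of the augmented external activity complex is obtained from F(B) by replacing z_Y by y_Y. -/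
open Set

variable {α : Type*}

/-! Let `Y ⊆ IA(B)`. An element `y ∈ Y` is the maximum of a cocircuit `D ⊆ (E \ B) ∪ {y}`, and
a circuit `C ⊆ B ∪ {e}` witnessing `e ∈ EA(B)` has maximum `e`. If `y ∈ C`, orthogonality of
circuits and cocircuits forces a second common element, which can only be `e`; then `e ≤ y ≤ e`,
which is absurd as `y ∈ B` and `e ∉ B`. Hence the witnessing circuits avoid `Y`, so
`EA(B \ Y) = EA(B)`, and both set identities follow by complementation inside `E`. -/

namespace Matroid

variable {M : Matroid α} {C D I J B Y : Set α} {e y : α}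

lemma Cct.isCircuit (hC : M.Cct C) : M.IsCircuit C :=
  isCircuit_iff_forall_ssubset.2 ⟨hC.1, fun _ hDC ↦
    (not_dep_iff (hDC.subset.trans hC.1.subset_ground)).1 (hC.2 _ hDC)⟩

lemma IsCircuit.mem_of_subset_insert_of_indep (hC : M.IsCircuit C) (hI : M.Indep I)
    (hCI : C ⊆ insert e I) : e ∈ C := by
  by_contra heC
  exact hC.not_indep (hI.subset ((subset_insert_iff_of_notMem heC).1 hCI))

lemma IsCircuit.exists_ne_mem_inter_of_isCocircuit (hC : M.IsCircuit C) (hD : M.IsCocircuit D)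
    (heC : e ∈ C) (heD : e ∈ D) : ∃ z ≠ e, z ∈ C ∧ z ∈ D := by
  obtain ⟨z, ⟨hzC, hzD⟩, hze⟩ :=
    (hC.isCocircuit_inter_nontrivial hD ⟨e, heC, heD⟩).exists_ne e
  exact ⟨z, hze, hzC, hzD⟩

section LinearOrder

variable [LinearOrder α]

lemma exA_subset_of_indep (hJ : M.Indep J) (hIJ : I ⊆ J) : M.exA I ⊆ M.exA J := by
  rintro e ⟨⟨heE, -⟩, C, hC, hCI, hmax⟩
  have heJ : e ∉ J := fun heJ ↦
    hC.isCircuit.not_indep (hJ.subset (hCI.trans (insert_subset heJ hIJ)))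
  exact ⟨⟨heE, heJ⟩, C, hC, hCI.trans (insert_subset_insert hIJ), hmax⟩

lemma IsBase.notMem_of_mem_inA (hB : M.IsBase B) (hy : y ∈ M.inA B) (hC : M.Cct C)
    (heB : e ∉ B) (hCB : C ⊆ insert e B) (hmax : ∀ f ∈ C, f ≤ e) : y ∉ C := by
  intro hyC
  obtain ⟨hyB, -, D, hD, hDB, hmaxD⟩ := hy
  have hyD : y ∈ D :=
    hD.isCircuit.mem_of_subset_insert_of_indep hB.compl_isBase_dual.indep hDB
  obtain ⟨z, hzy, hzC, hzD⟩ :=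
    hC.isCircuit.exists_ne_mem_inter_of_isCocircuit hD.isCircuit hyC hyD
  have hzB : z ∉ B := ((mem_insert_iff.1 (hDB hzD)).resolve_left hzy).2
  have hze : z = e := (mem_insert_iff.1 (hCB hzC)).resolve_right hzB
  subst hze
  exact heB (le_antisymm (hmax y hyC) (hmaxD z hzD) ▸ hyB)

lemma IsBase.exA_sdiff_of_subset_inA (hB : M.IsBase B) (hY : Y ⊆ M.inA B) :
    M.exA (B \ Y) = M.exA B := by
  refine (exA_subset_of_indep hB.indep sdiff_subset).antisymm ?_
  rintro e ⟨⟨heE, heB⟩, C, hC, hCB, hmax⟩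
  refine ⟨⟨heE, fun he ↦ heB he.1⟩, C, hC, fun c hc ↦ ?_, hmax⟩
  obtain rfl | hcB := mem_insert_iff.1 (hCB hc)
  · exact mem_insert _ _
  exact mem_insert_of_mem _ ⟨hcB, fun hcY ↦ hB.notMem_of_mem_inA (hY hcY) hC heB hCB hmax hc⟩

lemma union_exP_eq_sdiff_exA (hI : I ⊆ M.E) : I ∪ M.exP I = M.E \ M.exA I := by
  ext x
  by_cases hxI : x ∈ I
  · simp only [mem_union, hxI, true_or, mem_sdiff, hI hxI, true_and, true_iff]
    exact fun hxA ↦ hxA.1.2 hxI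
  · simp [exP, hxI]

end LinearOrder

end Matroid

open Matroid in
theorem facet_of_internally_related_general [LinearOrder α] (M : Matroid α)
    (B Y I : Set α) (hB : M.IsBase B) (hY : Y ⊆ M.inA B) (hI : I = B \ Y) :
    I ∪ M.exP I = B ∪ M.exP B ∧
    I ∪ M.exA I = (B ∪ M.exA B) \ Y ∧
    ((I ∪ M.exP I) ×ˢ ({0} : Set (Fin 3))) ∪ (Y ×ˢ ({1} : Set (Fin 3))) ∪
        ((I ∪ M.exA I) ×ˢ ({2} : Set (Fin 3))) =
      ((((B ∪ M.exP B) ×ˢ ({0} : Set (Fin 3))) ∪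
          ((B ∪ M.exA B) ×ˢ ({2} : Set (Fin 3)))) \ (Y ×ˢ ({2} : Set (Fin 3)))) ∪
        (Y ×ˢ ({1} : Set (Fin 3))) := by
  subst hI
  have hA : M.exA (B \ Y) = M.exA B := hB.exA_sdiff_of_subset_inA hY
  have hAY : Disjoint (M.exA B) Y :=
    disjoint_left.2 fun _ he hy ↦ he.1.2 (hY hy).1
  have hP : B \ Y ∪ M.exP (B \ Y) = B ∪ M.exP B := by
    rw [union_exP_eq_sdiff_exA (sdiff_subset.trans hB.subset_ground),
      union_exP_eq_sdiff_exA hB.subset_ground, hA]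
  have hZ : B \ Y ∪ M.exA (B \ Y) = (B ∪ M.exA B) \ Y := by
    rw [hA, union_sdiff_distrib, hAY.sdiff_eq_left]
  refine ⟨hP, hZ, ?_⟩
  rw [hP, hZ]
  ext ⟨a, j⟩
  fin_cases j <;> simp

/-- If `I = B \ Y` is internally related to `B` then `I ∪ EP(I) = B ∪ EP(B)` and
`I ∪ EA(I) = (B ∪ EA(B)) \ Y`; consequently the facet `F(I)` is obtained from `F(B)`
by replacing `z_Y` with `y_Y`. -/
theorem facet_of_internally_related [LinearOrder α] (M : Matroid α) [M.Finite]
    (B Y I : Set α) (hB : M.IsBase B) (hY : Y ⊆ M.inA B) (hI : I = B \ Y) :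
    I ∪ M.exP I = B ∪ M.exP B ∧
    I ∪ M.exA I = (B ∪ M.exA B) \ Y ∧
    ((I ∪ M.exP I) ×ˢ ({0} : Set (Fin 3))) ∪ (Y ×ˢ ({1} : Set (Fin 3))) ∪
        ((I ∪ M.exA I) ×ˢ ({2} : Set (Fin 3))) =
      ((((B ∪ M.exP B) ×ˢ ({0} : Set (Fin 3))) ∪
          ((B ∪ M.exA B) ×ˢ ({2} : Set (Fin 3)))) \ (Y ×ˢ ({2} : Set (Fin 3)))) ∪
        (Y ×ˢ ({1} : Set (Fin 3))) :=
  facet_of_internally_related_general M B Y I hB hY hI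
end

section
/- Let I and K be independent sets of a matroid M, both internally related to a basis C, with K not ≤_{ext/int} I. Then K \ I ⊆ IA(C), K \ I is nonempty, and for any c ∈ K \ I, the set J := K \ {c} is internally related to C with J <_{ext/int} K, and c ∈ EP(I). -/
open Set

variable {α : Type*}

/-! An element `c ∈ K \ I` is externally passive for `I` without any circuit–cocircuit argument:
`insert c I ⊆ C` is independent, so no circuit lies in it. -/

namespace Matroid

section

variable [LinearOrder α] {M : Matroid α} {I J K B S : Set α} {e : α}

lemma mem_exP_of_insert_indep (heS : e ∉ S) (hi : M.Indep (insert e S)) : e ∈ M.exP S :=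
  ⟨⟨hi.subset_ground (mem_insert e S), heS⟩,
    fun ⟨_, _, hCt, hCtS, _⟩ ↦ hCt.1.not_indep (hi.subset hCtS)⟩

lemma IntRelated.subset (h : M.IntRelated I B) : I ⊆ B := by
  obtain ⟨-, Y, -, rfl⟩ := h
  exact sdiff_subset

lemma IntRelated.sdiff_subset_inA (hI : M.IntRelated I B) (hKB : K ⊆ B) :
    K \ I ⊆ M.inA B := by
  obtain ⟨-, Y, hY, rfl⟩ := hI
  rintro x ⟨hxK, hxI⟩
  exact hY (by_contra fun hxY ↦ hxI ⟨hKB hxK, hxY⟩)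

lemma IntRelated.sdiff_singleton (hK : M.IntRelated K B) (he : e ∈ M.inA B) :
    M.IntRelated (K \ {e}) B := by
  obtain ⟨hB, Y, hY, rfl⟩ := hK
  exact ⟨hB, Y ∪ {e}, union_subset hY (singleton_subset_iff.2 he), sdiff_sdiff⟩

lemma extIntLE_of_subset (hI : M.IntRelated I B) (hJ : M.IntRelated J B) (hIJ : I ⊆ J) :
    M.extIntLE I J :=
  Or.inl ⟨⟨B, hI, hJ⟩, hIJ⟩

end

end Matroid

theorem internally_related_shelling_step_general [LinearOrder α] (M : Matroid α)
    (I K C : Set α) (hI : M.IntRelated I C) (hK : M.IntRelated K C)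
    (hKI : ¬ M.extIntLE K I) :
    K \ I ⊆ M.inA C ∧ (K \ I).Nonempty ∧
      ∀ c ∈ K \ I,
        M.IntRelated (K \ {c}) C ∧ M.extIntLE (K \ {c}) K ∧ K \ {c} ≠ K ∧
          c ∈ M.exP I := by
  have hactive : K \ I ⊆ M.inA C := hI.sdiff_subset_inA hK.subset
  have hnonempty : (K \ I).Nonempty :=
    nonempty_of_not_subset fun h ↦ hKI (Matroid.extIntLE_of_subset hK hI h)
  refine ⟨hactive, hnonempty, fun c hc ↦ ?_⟩
  have hrel : M.IntRelated (K \ {c}) C := hK.sdiff_singleton (hactive hc)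
  have hindep : M.Indep (insert c I) :=
    hI.1.indep.subset (insert_subset (hK.subset hc.1) hI.subset)
  exact ⟨hrel, Matroid.extIntLE_of_subset hrel hK sdiff_subset,
    (sdiff_singleton_ssubset.2 hc.1).ne, Matroid.mem_exP_of_insert_indep hc.2 hindep⟩

/-- For internally related independent sets `I, K` with `K ≰ I`: `K \ I ⊆ IA(C)` is
nonempty, and for each `c ∈ K \ I`, `J = K \ {c}` is internally related to `C` with
`J < K`, and `c ∈ EP(I)`. -/
theorem internally_related_shelling_step [LinearOrder α] (M : Matroid α) [M.Finite]
    (I K C : Set α) (hI : M.IntRelated I C) (hK : M.IntRelated K C)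
    (hKI : ¬ M.extIntLE K I) :
    K \ I ⊆ M.inA C ∧ (K \ I).Nonempty ∧
      ∀ c ∈ K \ I,
        M.IntRelated (K \ {c}) C ∧ M.extIntLE (K \ {c}) K ∧ K \ {c} ≠ K ∧
          c ∈ M.exP I :=
  internally_related_shelling_step_general M I K C hI hK hKI
end
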